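/- Let t0 > 0, let λ0 > 0, let (X, μ) be a measure space, let Λ : X → [0,∞) be measurable with Λ(ξ) ≥ λ0 for μ-almost every ξ ∈ X, and let b : [t0,∞) → ℝ be a measurable function such that m/t ≤ b(t) ≤ M/t for every t ≥ t0, where M ≥ m > 0 are real constants. Let u : [t0,∞) × X → ℝ be such that for every ξ ∈ X the function t ↦ u(t,ξ) is a solution of the damped oscillator equation u'' + b(t)u' + Λ(ξ)²u = 0, and such that for each t ≥ t0 the functions ξ ↦ u(t,ξ) and ξ ↦ ∂_t u(t,ξ) are measurable. Then for every t ≥ t0 one has ∫_X [ (∂_t u(t,ξ))² + Λ(ξ)²·u(t,ξ)² ] dμ(ξ) ≤ exp(m(M+8)/(λ0·t0)) · ( ∫_X [ (∂_t u(t0,ξ))² + Λ(ξ)²·u(t0,ξ)² ] dμ(ξ) ) · (t0/t)^m. -/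

import Mathlib

/-!
Fix `ξ` and write `λ = Λ ξ ≥ λ0`, `E = u'² + λ²u²`. Since `E' = -2 b u'² ≤ 0`, the energy is
nonincreasing, which settles `t ≤ t₁ := max t0 (m / λ)`. For `t ≥ t₁` we have `m ≤ λ t`, so the
perturbed energy `F = E + (m / t) u u'` satisfies `|F - E| ≤ x E` with `x = m / (2λt₁) ≤ 1/2`, and
for `Φ(t) = t ^ m (t / (2λt - m)) ^ (M - m + 1)` the product `Φ F` is nonincreasing. Therefore
`(1 - x) Φ(t) E(t) ≤ (1 + x) Φ(t₁) E(t0)`, where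
`Φ(t₁) / Φ(t) ≤ (t₁ / t) ^ m (1 - x) ^ (m - M - 1)`.
Since `x ≤ m / (2λ0 t0)` and `t₁ ≤ t0 + m / λ0`, the factors `(1 + x) / (1 - x) ^ (M - m + 2)` and
`(t₁ / t0) ^ m` together cost at most `exp (m (M + 8) / (λ0 t0))`. The derivatives exist only
almost everywhere; they are integrated by the fundamental theorem of calculus for absolutely
continuous functions. Integrating the pointwise bound over `X` gives the theorem.
-/

open Real Set Filter MeasureTheory intervalIntegral

open scoped Topology

/-- A solution of the damped oscillator equation `u'' + b(t) u' + λ² u = 0` on `[t0, ∞)`: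
a `C¹` function `u` (with derivative `u'`) whose derivative is locally absolutely continuous
(i.e. it is the integral of a locally integrable function `w`) and which satisfies the
equation almost everywhere on `[t0, ∞)`. -/
def IsDampedSol (t0 : ℝ) (b : ℝ → ℝ) (lam : ℝ) (u u' : ℝ → ℝ) : Prop :=
  (∀ t ∈ Ici t0, HasDerivAt u (u' t) t) ∧
  ContinuousOn u' (Ici t0) ∧
  ∃ w : ℝ → ℝ,
    (∀ T ≥ t0, IntervalIntegrable w volume t0 T) ∧
    (∀ t ∈ Ici t0, u' t = u' t0 + ∫ s in t0..t, w s) ∧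
    (∀ᵐ t ∂(volume.restrict (Ici t0)), w t + b t * u' t + lam ^ 2 * u t = 0)

namespace AbsolutelyContinuousOnInterval

theorem congr {X : Type*} [PseudoMetricSpace X] {f g : ℝ → X} {a b : ℝ}
    (hf : AbsolutelyContinuousOnInterval f a b) (hfg : EqOn f g (uIcc a b)) :
    AbsolutelyContinuousOnInterval g a b := by
  rw [absolutelyContinuousOnInterval_iff] at hf ⊢
  intro ε hε
  obtain ⟨δ, hδ, hfδ⟩ := hf ε hε
  refine ⟨δ, hδ, fun E hE hlen => ?_⟩
  convert hfδ E hE hlen using 1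
  refine Finset.sum_congr rfl fun i hi => ?_
  rw [hfg (hE.1 i hi).1, hfg (hE.1 i hi).2]

theorem of_eq_add_integral {f g : ℝ → ℝ} {a b : ℝ} (hg : IntervalIntegrable g volume a b)
    (hf : ∀ x ∈ uIcc a b, f x = f a + ∫ t in a..x, g t) :
    AbsolutelyContinuousOnInterval f a b :=
  (contDiffOn_const.absolutelyContinuousOnInterval.fun_add
    (hg.absolutelyContinuousOnInterval_intervalIntegral left_mem_uIcc)).congr
    fun x hx => (hf x hx).symm

theorem of_hasDerivAt {f f' : ℝ → ℝ} {a b : ℝ} (hf : ∀ x ∈ uIcc a b, HasDerivAt f (f' x) x)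
    (hf' : IntervalIntegrable f' volume a b) : AbsolutelyContinuousOnInterval f a b :=
  of_eq_add_integral hf' fun x hx => by
    have hsub : uIcc a x ⊆ uIcc a b := uIcc_subset_uIcc_left hx
    rw [integral_eq_sub_of_hasDerivAt (fun y hy => hf y (hsub hy)) (hf'.mono_set hsub)]
    ring

theorem le_of_ae_hasDerivAt_nonpos {f : ℝ → ℝ} {a b : ℝ}
    (hf : AbsolutelyContinuousOnInterval f a b) (hab : a ≤ b)
    (hf' : ∀ᵐ x, x ∈ Ioc a b → ∃ f', HasDerivAt f f' x ∧ f' ≤ 0) : f b ≤ f a := by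
  have hderiv : ∫ x in a..b, deriv f x ≤ 0 := by
    rw [integral_of_le hab]
    refine integral_nonpos_of_ae ((ae_restrict_iff' measurableSet_Ioc).mpr ?_)
    filter_upwards [hf'] with x hx hmem
    obtain ⟨f', hderiv, hneg⟩ := hx hmem
    exact hderiv.deriv ▸ hneg
  linarith [hf.integral_deriv_eq_sub]

end AbsolutelyContinuousOnInterval

theorem log_div_le_div_of_le_add {a b c : ℝ} (ha : 0 < a) (hab : a ≤ b) (hb : b ≤ a + c) :
    log (b / a) ≤ c / a := by
  have hlog := log_le_sub_one_of_pos (div_pos (ha.trans_le hab) ha)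
  have : b / a - 1 ≤ c / a := by
    rw [div_sub_one ha.ne']
    gcongr
    linarith
  linarith

theorem log_one_add_sub_mul_log_one_sub_le {x K : ℝ} (hx₀ : 0 ≤ x) (hx : x ≤ 1 / 2)
    (hK : 0 ≤ K) : log (1 + x) - (K + 1) * log (1 - x) ≤ (2 * K + 3) * x := by
  have h₁ : log (1 + x) ≤ x := by linarith [log_le_sub_one_of_pos (by linarith : 0 < 1 + x)]
  have h₂ : -log (1 - x) ≤ 2 * x := by
    have hlog := one_sub_inv_le_log_of_pos (by linarith : 0 < 1 - x)
    have : (1 - x)⁻¹ ≤ 1 + 2 * x := by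
      rw [inv_le_iff_one_le_mul₀ (by linarith)]
      nlinarith
    linarith
  nlinarith [mul_le_mul_of_nonneg_left h₂ (by linarith : 0 ≤ K + 1)]

theorem one_le_exp_mul_rpow {t0 t lam0 m M : ℝ} (ht0 : 0 < t0) (hlam0 : 0 < lam0) (hm : 0 < m)
    (hmM : m ≤ M) (ht : t0 ≤ t) (ht' : t ≤ t0 + m / lam0) :
    1 ≤ exp (m * (M + 8) / (lam0 * t0)) * (t0 / t) ^ m := by
  have hlog : log (t / t0) ≤ m / (lam0 * t0) := by
    rw [← div_div]
    exact log_div_le_div_of_le_add ht0 ht ht'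
  have hy : 0 ≤ m / (lam0 * t0) := by positivity
  rw [rpow_def_of_pos (div_pos ht0 (ht0.trans_le ht)), ← exp_add, ← inv_div t t0, log_inv]
  refine one_le_exp ?_
  have hB : m * (M + 8) / (lam0 * t0) = (M + 8) * (m / (lam0 * t0)) := by ring
  nlinarith [mul_le_mul_of_nonneg_left hlog hm.le]

def energy (lam : ℝ) (u u' : ℝ → ℝ) (t : ℝ) : ℝ := u' t ^ 2 + lam ^ 2 * u t ^ 2

noncomputable def perturbedEnergy (m lam : ℝ) (u u' : ℝ → ℝ) (t : ℝ) : ℝ :=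
  energy lam u u' t + m / t * (u t * u' t)

/-- `exp (weightExponent m M lam t) = t ^ m * (t / (2 * lam * t - m)) ^ (M - m + 1)`. -/
noncomputable def weightExponent (m M lam t : ℝ) : ℝ :=
  m * log t + (M - m + 1) * (log t - log (2 * lam * t - m))

theorem energy_nonneg (lam : ℝ) (u u' : ℝ → ℝ) (t : ℝ) : 0 ≤ energy lam u u' t := by
  unfold energy; positivity

theorem hasDerivAt_energy {lam s a a' : ℝ} {u u' : ℝ → ℝ} (hu : HasDerivAt u a s)
    (hu' : HasDerivAt u' a' s) :
    HasDerivAt (energy lam u u') (2 * u' s * a' + 2 * lam ^ 2 * u s * a) s := by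
  refine ((hu'.pow 2).add ((hu.pow 2).const_mul (lam ^ 2))).congr_deriv ?_
  push_cast
  ring

theorem hasDerivAt_perturbedEnergy {m lam s a a' : ℝ} {u u' : ℝ → ℝ} (hs : s ≠ 0)
    (hu : HasDerivAt u a s) (hu' : HasDerivAt u' a' s) :
    HasDerivAt (perturbedEnergy m lam u u')
      (2 * u' s * a' + 2 * lam ^ 2 * u s * a + m / s * (a * u' s + u s * a')
        - m / s ^ 2 * (u s * u' s)) s := by
  have hinv : HasDerivAt (fun x => m / x) (-(m / s ^ 2)) s := by
    simpa [div_eq_mul_inv] using (hasDerivAt_inv hs).const_mul m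
  refine ((hasDerivAt_energy (lam := lam) hu hu').add (hinv.mul (hu.mul hu'))).congr_deriv ?_
  simp only [Pi.mul_apply]
  ring

theorem hasDerivAt_weightExponent {m M lam s : ℝ} (hs : 0 < s) (hms : m < 2 * lam * s) :
    HasDerivAt (weightExponent m M lam)
      (m / s - (M - m + 1) * m / (s * (2 * lam * s - m))) s := by
  have hD : 2 * lam * s - m ≠ 0 := by linarith
  have hlin : HasDerivAt (fun y => 2 * lam * y - m) (2 * lam) s := by
    simpa using ((hasDerivAt_id s).const_mul (2 * lam)).sub_const m
  have hlog := Real.hasDerivAt_log hs.ne'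
  refine ((hlog.const_mul m).add ((hlog.sub (hlin.log hD)).const_mul (M - m + 1))).congr_deriv ?_
  generalize hDg : 2 * lam * s - m = D at hD ⊢
  field_simp
  rw [← hDg]
  ring

theorem weighted_perturbedEnergy_deriv_nonpos {m M lam t b u v : ℝ} (ht : 0 < t) (hm : 0 < m)
    (hmM : m ≤ M) (hmt : m ≤ lam * t) (hb₁ : m / t ≤ b) (hb₂ : b ≤ M / t) :
    (m / t - (M - m + 1) * m / (t * (2 * lam * t - m)))
        * (v ^ 2 + lam ^ 2 * u ^ 2 + m / t * (u * v))
      + (2 * v * (-(b * v) - lam ^ 2 * u) + 2 * lam ^ 2 * u * v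
        + m / t * (v * v + u * (-(b * v) - lam ^ 2 * u)) - m / t ^ 2 * (u * v)) ≤ 0 := by
  have hlam : 0 < lam := by nlinarith
  have hD : 0 < 2 * lam * t - m := by nlinarith
  have hbt₁ : 0 ≤ b * t - m := by linarith [(div_le_iff₀ ht).mp hb₁]
  have hbt₂ : 0 ≤ M - b * t := by linarith [(le_div_iff₀ ht).mp hb₂]
  have hK : 0 ≤ M - m + 1 := by linarith
  have hsum : 0 ≤ 2 * (2 * lam * t * (2 * lam * t - m)) * (b * t - m) * v ^ 2
      + m * (2 * lam * t - m) * (b * t + 1 - m) * (v + lam * u) ^ 2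
      + m * (2 * lam * t - m) * (M - b * t) * (v ^ 2 + lam ^ 2 * u ^ 2)
      + (M - m + 1) * m ^ 2 * (v + lam * u) ^ 2 := by
    have : 0 ≤ b * t + 1 - m := by linarith
    positivity
  -- cleared of denominators, the left side is minus a sum of squares with nonnegative weights
  refine nonpos_of_mul_nonpos_left (b := 2 * lam * t ^ 2 * (2 * lam * t - m)) ?_ (by positivity)
  calc _ = -(2 * (2 * lam * t * (2 * lam * t - m)) * (b * t - m) * v ^ 2
          + m * (2 * lam * t - m) * (b * t + 1 - m) * (v + lam * u) ^ 2
          + m * (2 * lam * t - m) * (M - b * t) * (v ^ 2 + lam ^ 2 * u ^ 2)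
          + (M - m + 1) * m ^ 2 * (v + lam * u) ^ 2) := by
        generalize hDg : 2 * lam * t - m = D at hD ⊢
        field_simp
        rw [← hDg]
        ring
    _ ≤ 0 := neg_nonpos.2 hsum

theorem abs_perturbedEnergy_sub_energy_le {m lam s : ℝ} (u u' : ℝ → ℝ) (hm : 0 ≤ m)
    (hlam : 0 < lam) (hs : 0 < s) :
    |perturbedEnergy m lam u u' s - energy lam u u' s|
      ≤ m / (2 * lam * s) * energy lam u u' s := by
  have hamgm : 2 * (lam * |u s|) * |u' s| ≤ energy lam u u' s := by
    have := two_mul_le_add_sq (lam * |u s|) |u' s|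
    simp only [energy, mul_pow, sq_abs] at this ⊢
    linarith
  rw [perturbedEnergy, add_sub_cancel_left, abs_mul, abs_mul, abs_of_nonneg (by positivity)]
  calc m / s * (|u s| * |u' s|) = m / (2 * lam * s) * (2 * (lam * |u s|) * |u' s|) := by
        field_simp
    _ ≤ m / (2 * lam * s) * energy lam u u' s := by gcongr

theorem weightExponent_sub_le {m M lam t₁ t : ℝ} (hm : 0 ≤ m) (hK : 0 ≤ M - m + 1)
    (hlam : 0 < lam) (ht₁ : 0 < t₁) (hmt₁ : m < 2 * lam * t₁) (ht : t₁ ≤ t) :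
    weightExponent m M lam t₁ - weightExponent m M lam t
      ≤ m * log (t₁ / t) - (M - m + 1) * log (1 - m / (2 * lam * t₁)) := by
  have htpos : 0 < t := ht₁.trans_le ht
  have hD₁ : 0 < 2 * lam * t₁ - m := by linarith
  have hD : 0 < 2 * lam * t - m := by nlinarith
  have hlog₁ :
      log (1 - m / (2 * lam * t₁)) = log (2 * lam * t₁ - m) - log (2 * lam * t₁) := by
    rw [← log_div hD₁.ne' (by positivity)]
    congr 1
    field_simp
  have hcross : log t₁ + log (2 * lam * t - m) ≤ log t + log (2 * lam * t₁) := by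
    rw [← log_mul ht₁.ne' hD.ne', ← log_mul htpos.ne' (by positivity)]
    exact log_le_log (by positivity) (by nlinarith)
  rw [log_div ht₁.ne' htpos.ne', hlog₁]
  unfold weightExponent
  linarith [mul_le_mul_of_nonneg_left hcross hK]

theorem one_add_mul_exp_weightExponent_le {t0 t₁ t lam0 lam m M : ℝ} (ht0 : 0 < t0)
    (hlam0 : 0 < lam0) (hlam : lam0 ≤ lam) (hm : 0 < m) (hmM : m ≤ M) (ht₁ : t0 ≤ t₁)
    (hmt₁ : m ≤ lam * t₁) (ht₁' : t₁ ≤ t0 + m / lam0) (ht : t₁ ≤ t) :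
    (1 + m / (2 * lam * t₁)) * exp (weightExponent m M lam t₁)
      ≤ (1 - m / (2 * lam * t₁)) * exp (weightExponent m M lam t)
        * (exp (m * (M + 8) / (lam0 * t0)) * (t0 / t) ^ m) := by
  have hlam' : 0 < lam := hlam0.trans_le hlam
  have ht₁pos : 0 < t₁ := ht0.trans_le ht₁
  have htpos : 0 < t := ht₁pos.trans_le ht
  set x := m / (2 * lam * t₁) with hx
  set y := m / (lam0 * t0) with hy
  have hy₀ : 0 ≤ y := by positivity
  have hx₀ : 0 ≤ x := by positivity
  have hx₁ : x ≤ 1 / 2 := by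
    rw [hx, div_le_iff₀ (by positivity)]
    linarith
  have hxy : x ≤ y / 2 := by
    calc x ≤ m / (2 * (lam0 * t0)) :=
          div_le_div_of_nonneg_left hm.le (by positivity) (by nlinarith)
      _ = y / 2 := by ring
  have hlog₁ : log (t₁ / t0) ≤ y := by
    rw [hy, ← div_div]
    exact log_div_le_div_of_le_add ht0 ht₁ ht₁'
  have hG := weightExponent_sub_le (M := M) hm.le (by linarith) hlam' ht₁pos (by linarith) ht
  have hx_log := log_one_add_sub_mul_log_one_sub_le hx₀ hx₁ (show 0 ≤ M - m + 1 by linarith)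
  have hB : m * (M + 8) / (lam0 * t0) = (M + 8) * y := by ring
  rw [rpow_def_of_pos (div_pos ht0 htpos), ← exp_log (show 0 < 1 + x by linarith),
    ← exp_log (show 0 < 1 - x by linarith)]
  simp only [← exp_add]
  refine exp_le_exp.2 ?_
  rw [log_div ht₁pos.ne' htpos.ne'] at hG
  rw [log_div ht₁pos.ne' ht0.ne'] at hlog₁
  rw [log_div ht0.ne' htpos.ne', hB]
  linarith [mul_le_mul_of_nonneg_left hlog₁ hm.le,
    mul_le_mul_of_nonneg_left hxy (show 0 ≤ 2 * (M - m + 1) + 3 by linarith)]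

namespace IsDampedSol

variable {t0 lam : ℝ} {b u u' : ℝ → ℝ}

theorem absolutelyContinuousOnInterval (h : IsDampedSol t0 b lam u u') {T : ℝ} (hT : t0 ≤ T) :
    AbsolutelyContinuousOnInterval u t0 T := by
  have hsub : uIcc t0 T ⊆ Ici t0 := by
    rw [uIcc_of_le hT]
    exact Icc_subset_Ici_self
  exact .of_hasDerivAt (fun x hx => h.1 x (hsub hx)) ((h.2.1.mono hsub).intervalIntegrable)

theorem absolutelyContinuousOnInterval_deriv (h : IsDampedSol t0 b lam u u') {T : ℝ}
    (hT : t0 ≤ T) : AbsolutelyContinuousOnInterval u' t0 T := by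
  obtain ⟨-, -, w, hw, hrep, -⟩ := h
  refine .of_eq_add_integral (hw T hT) fun x hx => hrep x ?_
  rw [uIcc_of_le hT] at hx
  exact hx.1

theorem ae_hasDerivAt_deriv (h : IsDampedSol t0 b lam u u') {T : ℝ} (hT : t0 ≤ T) :
    ∀ᵐ t, t ∈ Ioc t0 T → HasDerivAt u' (-(b t * u' t) - lam ^ 2 * u t) t := by
  obtain ⟨-, -, w, hw, hrep, heq⟩ := h
  filter_upwards [(hw T hT).ae_hasDerivAt_integral, (ae_restrict_iff' measurableSet_Ici).mp heq]
    with t hw' heqt ht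
  have htT : t ∈ uIcc t0 T := by
    rw [uIcc_of_le hT]
    exact Ioc_subset_Icc_self ht
  have hprim := ((hw' htT) t0 left_mem_uIcc).const_add (u' t0)
  have hloc : u' =ᶠ[𝓝 t] fun x => u' t0 + ∫ s in t0..x, w s :=
    eventually_of_mem (Ioi_mem_nhds ht.1) fun x hx => hrep x (mem_Ici.2 hx.le)
  rw [show -(b t * u' t) - lam ^ 2 * u t = w t by linarith [heqt ht.1.le]]
  exact hprim.congr_of_eventuallyEq hloc

theorem absolutelyContinuousOnInterval_energy (h : IsDampedSol t0 b lam u u') {T : ℝ}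
    (hT : t0 ≤ T) : AbsolutelyContinuousOnInterval (energy lam u u') t0 T := by
  have hu := h.absolutelyContinuousOnInterval hT
  have hu' := h.absolutelyContinuousOnInterval_deriv hT
  exact ((hu'.fun_mul hu').fun_add ((hu.fun_mul hu).const_mul (lam ^ 2))).congr fun s _ => by
    simp only [energy]
    ring

theorem energy_le (h : IsDampedSol t0 b lam u u') (hb : ∀ t ≥ t0, 0 ≤ b t) {t : ℝ}
    (ht : t0 ≤ t) : energy lam u u' t ≤ energy lam u u' t0 := by
  refine (h.absolutelyContinuousOnInterval_energy ht).le_of_ae_hasDerivAt_nonpos ht ?_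
  filter_upwards [h.ae_hasDerivAt_deriv ht] with s hs hmem
  refine ⟨_, hasDerivAt_energy (h.1 s hmem.1.le) (hs hmem), ?_⟩
  nlinarith [mul_nonneg (hb s hmem.1.le) (sq_nonneg (u' s))]

theorem absolutelyContinuousOnInterval_perturbedEnergy (h : IsDampedSol t0 b lam u u')
    (ht0 : 0 < t0) {m t₁ t : ℝ} (ht₁ : t0 ≤ t₁) (ht : t₁ ≤ t) :
    AbsolutelyContinuousOnInterval (perturbedEnergy m lam u u') t₁ t := by
  have hsub : uIcc t₁ t ⊆ uIcc t0 t := by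
    rw [uIcc_of_le ht, uIcc_of_le (ht₁.trans ht)]
    exact Icc_subset_Icc_left ht₁
  have hinv : AbsolutelyContinuousOnInterval (fun s => m / s) t₁ t :=
    ContDiffOn.absolutelyContinuousOnInterval fun s hs => by
      have : s ≠ 0 := by
        rw [uIcc_of_le ht] at hs
        linarith [hs.1]
      exact (by fun_prop (disch := assumption) : ContDiffAt ℝ 1 (fun s => m / s) s)
        |>.contDiffWithinAt
  have hu := (h.absolutelyContinuousOnInterval (ht₁.trans ht)).mono hsub
  have hu' := (h.absolutelyContinuousOnInterval_deriv (ht₁.trans ht)).mono hsub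
  exact ((h.absolutelyContinuousOnInterval_energy (ht₁.trans ht)).mono hsub).fun_add
    (hinv.fun_mul (hu.fun_mul hu'))

theorem weighted_perturbedEnergy_le (h : IsDampedSol t0 b lam u u') {m M : ℝ} (ht0 : 0 < t0)
    (hm : 0 < m) (hmM : m ≤ M) (hb : ∀ t ≥ t0, m / t ≤ b t ∧ b t ≤ M / t) {t₁ t : ℝ}
    (ht₁ : t0 ≤ t₁) (hmt₁ : m ≤ lam * t₁) (ht : t₁ ≤ t) :
    exp (weightExponent m M lam t) * perturbedEnergy m lam u u' t
      ≤ exp (weightExponent m M lam t₁) * perturbedEnergy m lam u u' t₁ := by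
  have hbounds : ∀ s, t₁ ≤ s → 0 < s ∧ m ≤ lam * s := fun s hs => by
    refine ⟨by linarith, hmt₁.trans ?_⟩
    have : 0 < lam := by nlinarith
    nlinarith
  have hweight :
      AbsolutelyContinuousOnInterval (fun s => exp (weightExponent m M lam s)) t₁ t :=
    ContDiffOn.absolutelyContinuousOnInterval fun s hs => by
      rw [uIcc_of_le ht] at hs
      obtain ⟨hs₀, hms⟩ := hbounds s hs.1
      have : s ≠ 0 := hs₀.ne'
      have : 2 * lam * s - m ≠ 0 := by linarith
      unfold weightExponent
      exact (by fun_prop (disch := assumption) : ContDiffAt ℝ 1 _ s).contDiffWithinAt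
  refine (hweight.fun_mul (h.absolutelyContinuousOnInterval_perturbedEnergy ht0 ht₁ ht))
    |>.le_of_ae_hasDerivAt_nonpos ht ?_
  filter_upwards [h.ae_hasDerivAt_deriv (ht₁.trans ht)] with s hs hmem
  have hst0 : t0 ≤ s := ht₁.trans hmem.1.le
  obtain ⟨hs₀, hms⟩ := hbounds s hmem.1.le
  refine ⟨_, (hasDerivAt_weightExponent hs₀ (by linarith)).exp.mul
    (hasDerivAt_perturbedEnergy hs₀.ne' (h.1 s hst0) (hs ⟨ht₁.trans_lt hmem.1, hmem.2⟩)), ?_⟩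
  have key := mul_nonpos_of_nonneg_of_nonpos (exp_pos (weightExponent m M lam s)).le
    (weighted_perturbedEnergy_deriv_nonpos (u := u s) (v := u' s) hs₀ hm hmM hms
      (hb s hst0).1 (hb s hst0).2)
  simp only [perturbedEnergy, energy]
  linarith

theorem energy_le_exp_mul_rpow (h : IsDampedSol t0 b lam u u') {lam0 m M : ℝ} (ht0 : 0 < t0)
    (hlam0 : 0 < lam0) (hlam : lam0 ≤ lam) (hm : 0 < m) (hmM : m ≤ M)
    (hb : ∀ t ≥ t0, m / t ≤ b t ∧ b t ≤ M / t) {t : ℝ} (ht : t0 ≤ t) :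
    energy lam u u' t
      ≤ exp (m * (M + 8) / (lam0 * t0)) * energy lam u u' t0 * (t0 / t) ^ m := by
  have hlam' : 0 < lam := hlam0.trans_le hlam
  have hb₀ : ∀ s ≥ t0, 0 ≤ b s := fun s hs =>
    (div_pos hm (ht0.trans_le hs)).le.trans (hb s hs).1
  set t₁ := max t0 (m / lam)
  have ht₁ : t0 ≤ t₁ := le_max_left _ _
  have hmt₁ : m ≤ lam * t₁ := (div_le_iff₀' hlam').1 (le_max_right _ _)
  have ht₁' : t₁ ≤ t0 + m / lam0 := by
    have : m / lam ≤ m / lam0 := div_le_div_of_nonneg_left hm.le hlam0 hlam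
    exact max_le (le_add_of_nonneg_right (by positivity)) (by linarith)
  rcases le_total t t₁ with htt₁ | ht₁t
  · calc energy lam u u' t ≤ energy lam u u' t0 := h.energy_le hb₀ ht
      _ ≤ _ := by
        nlinarith [one_le_exp_mul_rpow ht0 hlam0 hm hmM ht (htt₁.trans ht₁'),
          energy_nonneg lam u u' t0]
  set x := m / (2 * lam * t₁)
  have ht₁pos : 0 < t₁ := ht0.trans_le ht₁
  have hx₁ : x < 1 := by
    rw [div_lt_one (by positivity)]
    linarith
  have hlow : (1 - x) * energy lam u u' t ≤ perturbedEnergy m lam u u' t := by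
    have hcomp := abs_perturbedEnergy_sub_energy_le u u' hm.le hlam' (ht₁pos.trans_le ht₁t)
    have hxt : m / (2 * lam * t) ≤ x :=
      div_le_div_of_nonneg_left hm.le (by positivity) (by nlinarith)
    linarith [(abs_le.1 hcomp).1, mul_le_mul_of_nonneg_right hxt (energy_nonneg lam u u' t)]
  have hup : perturbedEnergy m lam u u' t₁ ≤ (1 + x) * energy lam u u' t₁ := by
    have hcomp := abs_perturbedEnergy_sub_energy_le u u' hm.le hlam' ht₁pos
    linarith [(abs_le.1 hcomp).2]
  refine le_of_mul_le_mul_left ?_ (mul_pos (sub_pos.2 hx₁) (exp_pos (weightExponent m M lam t)))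
  calc (1 - x) * exp (weightExponent m M lam t) * energy lam u u' t
      = exp (weightExponent m M lam t) * ((1 - x) * energy lam u u' t) := by ring
    _ ≤ exp (weightExponent m M lam t) * perturbedEnergy m lam u u' t := by gcongr
    _ ≤ exp (weightExponent m M lam t₁) * perturbedEnergy m lam u u' t₁ :=
        h.weighted_perturbedEnergy_le ht0 hm hmM hb ht₁ hmt₁ ht₁t
    _ ≤ exp (weightExponent m M lam t₁) * ((1 + x) * energy lam u u' t₁) := by gcongr
    _ ≤ exp (weightExponent m M lam t₁) * ((1 + x) * energy lam u u' t0) := by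
        have : 0 ≤ 1 + x := by linarith [show 0 ≤ x by positivity]
        gcongr
        exact h.energy_le hb₀ ht₁
    _ ≤ (1 - x) * exp (weightExponent m M lam t)
          * (exp (m * (M + 8) / (lam0 * t0)) * (t0 / t) ^ m) * energy lam u u' t0 := by
        rw [← mul_assoc, mul_comm _ (1 + x)]
        exact mul_le_mul_of_nonneg_right
          (one_add_mul_exp_weightExponent_le ht0 hlam0 hlam hm hmM ht₁ hmt₁ ht₁' ht₁t)
          (energy_nonneg lam u u' t0)
    _ = _ := by ring

end IsDampedSol

theorem coercive_decay_PDE_general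
    {X : Type*} [MeasurableSpace X] (μ : Measure X)
    (t0 lam0 m M : ℝ) (ht0 : 0 < t0) (hlam0 : 0 < lam0) (hm : 0 < m) (hmM : m ≤ M)
    (Λ : X → ℝ)
    (hΛlb : ∀ᵐ ξ ∂μ, lam0 ≤ Λ ξ)
    (b : ℝ → ℝ)
    (hb : ∀ t ≥ t0, m / t ≤ b t ∧ b t ≤ M / t)
    (u u' : ℝ → X → ℝ)
    (hsol : ∀ ξ, IsDampedSol t0 b (Λ ξ) (fun t => u t ξ) (fun t => u' t ξ)) :
    ∀ t ≥ t0,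
      (∫⁻ ξ, ENNReal.ofReal (u' t ξ ^ 2 + Λ ξ ^ 2 * u t ξ ^ 2) ∂μ) ≤
        ENNReal.ofReal (Real.exp (m * (M + 8) / (lam0 * t0))) *
          (∫⁻ ξ, ENNReal.ofReal (u' t0 ξ ^ 2 + Λ ξ ^ 2 * u t0 ξ ^ 2) ∂μ) *
          ENNReal.ofReal ((t0 / t) ^ m) := by
  intro t ht
  have hC : 0 ≤ exp (m * (M + 8) / (lam0 * t0)) * (t0 / t) ^ m :=
    mul_nonneg (exp_pos _).le (rpow_nonneg (div_nonneg ht0.le (ht0.le.trans ht)) m)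
  calc (∫⁻ ξ, ENNReal.ofReal (u' t ξ ^ 2 + Λ ξ ^ 2 * u t ξ ^ 2) ∂μ)
      ≤ ∫⁻ ξ, ENNReal.ofReal (exp (m * (M + 8) / (lam0 * t0)) * (t0 / t) ^ m)
          * ENNReal.ofReal (u' t0 ξ ^ 2 + Λ ξ ^ 2 * u t0 ξ ^ 2) ∂μ := by
        refine lintegral_mono_ae (hΛlb.mono fun ξ hξ => ?_)
        rw [← ENNReal.ofReal_mul hC]
        refine ENNReal.ofReal_le_ofReal ?_
        exact ((hsol ξ).energy_le_exp_mul_rpow ht0 hlam0 hξ hm hmM hb ht).trans_eq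
          (mul_right_comm _ _ _)
    _ = _ := by
        rw [lintegral_const_mul' _ _ ENNReal.ofReal_ne_top, ENNReal.ofReal_mul (exp_pos _).le]
        ring

theorem coercive_decay_PDE
    {X : Type*} [MeasurableSpace X] (μ : Measure X)
    (t0 lam0 m M : ℝ) (ht0 : 0 < t0) (hlam0 : 0 < lam0) (hm : 0 < m) (hmM : m ≤ M)
    (Λ : X → ℝ) (hΛmeas : Measurable Λ) (hΛpos : ∀ ξ, 0 ≤ Λ ξ)
    (hΛlb : ∀ᵐ ξ ∂μ, lam0 ≤ Λ ξ)
    (b : ℝ → ℝ) (hbmeas : Measurable b)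
    (hb : ∀ t ≥ t0, m / t ≤ b t ∧ b t ≤ M / t)
    (u u' : ℝ → X → ℝ)
    (hsol : ∀ ξ, IsDampedSol t0 b (Λ ξ) (fun t => u t ξ) (fun t => u' t ξ))
    (hmeas : ∀ t ≥ t0, Measurable (u t) ∧ Measurable (u' t)) :
    ∀ t ≥ t0,
      (∫⁻ ξ, ENNReal.ofReal (u' t ξ ^ 2 + Λ ξ ^ 2 * u t ξ ^ 2) ∂μ) ≤
        ENNReal.ofReal (Real.exp (m * (M + 8) / (lam0 * t0))) *
          (∫⁻ ξ, ENNReal.ofReal (u' t0 ξ ^ 2 + Λ ξ ^ 2 * u t0 ξ ^ 2) ∂μ) *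
          ENNReal.ofReal ((t0 / t) ^ m) :=
  coercive_decay_PDE_general μ t0 lam0 m M ht0 hlam0 hm hmM Λ hΛlb b hb u u' hsol
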